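/- Let d ≥ 1, n ≥ 1 with 4 | n, and let G be the grid graph of dimensions (n/4) × (n/4) × n × ⋯ × n (d factors in total, the first two of side n/4). Then for every 1/2 ≤ α < 1, any α-separator of G has cardinality at least (1−α)·n^{d−1}/(16d). -/

import Mathlib

/-- The grid graph on the box `∏ i, {0, …, r i − 1}`: two vertices are adjacent
iff they differ in exactly one coordinate and there by exactly 1. -/
def boxGraph {d : ℕ} (r : Fin d → ℕ) : SimpleGraph ((i : Fin d) → Fin (r i)) where
  Adj v w := ∃ k, (∀ j, j ≠ k → v j = w j) ∧
    ((v k : ℕ) + 1 = (w k : ℕ) ∨ (w k : ℕ) + 1 = (v k : ℕ))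
  symm := ⟨by
    rintro v w ⟨k, h1, h2⟩
    exact ⟨k, fun j hj => (h1 j hj).symm, h2.symm⟩⟩
  loopless := ⟨by
    rintro v ⟨k, _, h2⟩
    omega⟩

/-- The `d`-dimensional grid graph `G_d(n)` on `{0, …, n−1}^d`. -/
def gridGraph (d n : ℕ) : SimpleGraph ((_ : Fin d) → Fin n) :=
  boxGraph (fun _ => n)

/-- The graph `G` with the vertices of `C` avoided: edges of `G` with both
endpoints outside `C`. Its reachability classes on `Cᶜ` are the connected
components of `G` with `C` removed. -/
def avoidGraph {V : Type*} (G : SimpleGraph V) (C : Set V) : SimpleGraph V where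
  Adj a b := G.Adj a b ∧ a ∉ C ∧ b ∉ C
  symm := ⟨fun _ _ ⟨h, ha, hb⟩ => ⟨h.symm, hb, ha⟩⟩
  loopless := ⟨fun _ ⟨h, _, _⟩ => G.irrefl h⟩

/-!
Route every ordered pair of vertices `(a, b)` along the staircase path that changes the
coordinates of `a` into those of `b` one at a time, in increasing order. On its `k`-th leg the
pair is determined by the current vertex `c`, the coordinates of `a` up to `k` and those of `b`
from `k` on, so `c` lies on at most `N · ∑ₖ rₖ` of these paths, `N` being the number of vertices.
If every component outside `C` has at most `αN` vertices, at least `(N - |C|)((1 - α)N - |C|)`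
pairs outside `C` are separated, and the path of each of them meets `C`; this gives
`(1 - α)N ≤ |C| (∑ₖ rₖ + 2)`. For the squeezed grid `N = nᵈ/16` and `∑ₖ rₖ + 2 ≤ dn`.
-/

open Finset

section Separator

variable {V : Type*} [Fintype V] (G : SimpleGraph V) (C : Finset V)

def separatedPairs : Set (V × V) :=
  {p | p.1 ∉ C ∧ p.2 ∉ C ∧ ¬ (avoidGraph G C).Reachable p.1 p.2}

theorem ncard_separatedPairs_ge {α : ℝ}
    (hsep : ∀ v ∉ C, ({w | (avoidGraph G ↑C).Reachable v w} : Set V).ncard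
      ≤ α * ((Finset.univ : Finset V).card : ℝ)) :
    ((Fintype.card V : ℝ) - #C) * ((1 - α) * Fintype.card V - #C)
      ≤ (separatedPairs G C).ncard := by
  classical
  have hrow : ∀ a ∈ Cᶜ, ((Fintype.card V : ℝ) - #C) - α * Fintype.card V
      ≤ #{b ∈ Cᶜ | ¬ (avoidGraph G C).Reachable a b} := by
    intro a ha
    have hreach : (#{b ∈ Cᶜ | (avoidGraph G C).Reachable a b} : ℝ) ≤ α * Fintype.card V := by
      refine le_trans ?_ (card_univ (α := V) ▸ hsep a (mem_compl.mp ha))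
      have hsub : (↑{b ∈ Cᶜ | (avoidGraph G C).Reachable a b} : Set V)
          ⊆ {w | (avoidGraph G ↑C).Reachable a w} := fun w hw => (mem_filter.mp hw).2
      exact_mod_cast (Set.ncard_coe_finset _).symm.trans_le (Set.ncard_le_ncard hsub)
    have hsplit : #{b ∈ Cᶜ | (avoidGraph G C).Reachable a b}
        + #{b ∈ Cᶜ | ¬ (avoidGraph G C).Reachable a b} = Fintype.card V - #C := by
      rw [card_filter_add_card_filter_not, card_compl]
    have hsplitℝ : (#{b ∈ Cᶜ | (avoidGraph G C).Reachable a b} : ℝ)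
        + #{b ∈ Cᶜ | ¬ (avoidGraph G C).Reachable a b} = Fintype.card V - #C := by
      rw [← Nat.cast_sub (card_le_univ C)]; exact_mod_cast hsplit
    linarith
  have hcard : (separatedPairs G C).ncard
      = ∑ a ∈ Cᶜ, #{b ∈ Cᶜ | ¬ (avoidGraph G C).Reachable a b} := by
    have hset : separatedPairs G C
        = ↑{p ∈ Cᶜ ×ˢ Cᶜ | ¬ (avoidGraph G C).Reachable p.1 p.2} := by
      ext p; simp [separatedPairs, and_assoc]
    rw [hset, Set.ncard_coe_finset, card_filter, sum_product]
    simp only [card_filter]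
  calc ((Fintype.card V : ℝ) - #C) * ((1 - α) * Fintype.card V - #C)
      = ∑ _a ∈ Cᶜ, (((Fintype.card V : ℝ) - #C) - α * Fintype.card V) := by
        rw [sum_const, card_compl, nsmul_eq_mul, Nat.cast_sub (card_le_univ C)]; ring
    _ ≤ ∑ a ∈ Cᶜ, (#{b ∈ Cᶜ | ¬ (avoidGraph G C).Reachable a b} : ℝ) := sum_le_sum hrow
    _ = (separatedPairs G C).ncard := by rw [hcard]; push_cast; rfl

theorem ncard_separatedPairs_le (R : V → V → Set V)
    (hR : ∀ a b, Disjoint (R a b) ↑C → (avoidGraph G C).Reachable a b) {L : ℕ}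
    (hload : ∀ c, {p : V × V | c ∈ R p.1 p.2}.ncard ≤ L) :
    (separatedPairs G C).ncard ≤ #C * L := by
  have hcover : separatedPairs G C ⊆ ⋃ c ∈ C, {p : V × V | c ∈ R p.1 p.2} := by
    rintro ⟨a, b⟩ ⟨-, -, hab⟩
    obtain ⟨c, hcR, hcC⟩ := Set.not_disjoint_iff.mp (mt (hR a b) hab)
    exact Set.mem_biUnion hcC hcR
  calc (separatedPairs G C).ncard
      ≤ (⋃ c ∈ C, {p : V × V | c ∈ R p.1 p.2}).ncard := Set.ncard_le_ncard hcover
    _ ≤ ∑ c ∈ C, {p : V × V | c ∈ R p.1 p.2}.ncard := C.set_ncard_biUnion_le _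
    _ ≤ #C * L := by simpa using sum_le_sum fun c _ => hload c

theorem one_sub_mul_card_sq_le_of_load_le {α : ℝ} (hα : 0 ≤ α)
    (hsep : ∀ v ∉ C, ({w | (avoidGraph G ↑C).Reachable v w} : Set V).ncard
      ≤ α * ((Finset.univ : Finset V).card : ℝ))
    (R : V → V → Set V) (hR : ∀ a b, Disjoint (R a b) ↑C → (avoidGraph G C).Reachable a b)
    {L : ℕ} (hload : ∀ c, {p : V × V | c ∈ R p.1 p.2}.ncard ≤ L) :
    (1 - α) * (Fintype.card V : ℝ) ^ 2 ≤ #C * (L + 2 * Fintype.card V) := by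
  have hlower := ncard_separatedPairs_ge G C hsep
  have hupper : ((separatedPairs G C).ncard : ℝ) ≤ #C * L := by
    exact_mod_cast ncard_separatedPairs_le G C R hR hload
  have hN : (0 : ℝ) ≤ Fintype.card V := Nat.cast_nonneg _
  -- expand the lower bound, discarding `|C|² ≥ 0` and `α |C| N ≥ 0`
  nlinarith [sq_nonneg (#C : ℝ), mul_nonneg (mul_nonneg hα (Nat.cast_nonneg #C)) hN]

end Separator

namespace boxGraph

variable {d : ℕ} {r : Fin d → ℕ}

def staircaseSegment (a b : (i : Fin d) → Fin (r i)) (k : Fin d) : Set ((i : Fin d) → Fin (r i)) :=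
  {v | (∀ j < k, v j = b j) ∧ ∀ j, k < j → v j = a j}

def staircase (a b : (i : Fin d) → Fin (r i)) : Set ((i : Fin d) → Fin (r i)) :=
  ⋃ k, staircaseSegment a b k

theorem reachable_update (C : Set ((i : Fin d) → Fin (r i))) (x : (i : Fin d) → Fin (r i))
    (k : Fin d) (hline : ∀ t, Function.update x k t ∉ C) (t : Fin (r k)) :
    (avoidGraph (boxGraph r) C).Reachable x (Function.update x k t) := by
  let line : SimpleGraph.pathGraph (r k) →g avoidGraph (boxGraph r) C :=
    { toFun := Function.update x k
      map_rel' := fun {s t} hst => by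
        refine ⟨⟨k, fun j hj => ?_, ?_⟩, hline s, hline t⟩
        · simp [Function.update_of_ne hj]
        · simpa using SimpleGraph.pathGraph_adj.mp hst }
  have h := (SimpleGraph.pathGraph_preconnected _ (x k) t).map line
  rwa [show line (x k) = x from Function.update_eq_self k x] at h

theorem reachable_of_disjoint_staircase (C : Set ((i : Fin d) → Fin (r i)))
    (a b : (i : Fin d) → Fin (r i)) (h : Disjoint (staircase a b) C) :
    (avoidGraph (boxGraph r) C).Reachable a b := by
  classical
  let corner (m : ℕ) : (i : Fin d) → Fin (r i) := fun i => if (i : ℕ) < m then b i else a i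
  have hcorner : ∀ m (hm : m < d),
      corner (m + 1) = Function.update (corner m) ⟨m, hm⟩ (b ⟨m, hm⟩) := by
    intro m hm
    funext i
    rcases lt_trichotomy (i : ℕ) m with hi | hi | hi
    · have hne : i ≠ ⟨m, hm⟩ := Fin.ne_of_val_ne hi.ne
      simp [corner, Function.update_of_ne hne, hi, hi.trans m.lt_succ_self]
    · obtain rfl : i = ⟨m, hm⟩ := Fin.ext hi
      simp [corner]
    · have hne : i ≠ ⟨m, hm⟩ := Fin.ne_of_val_ne hi.ne'
      simp [corner, Function.update_of_ne hne, hi.not_gt, Nat.not_lt.mpr hi]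
  have hline : ∀ m (hm : m < d) t,
      Function.update (corner m) ⟨m, hm⟩ t ∈ staircaseSegment a b ⟨m, hm⟩ := by
    refine fun m hm t => ⟨fun j hj => ?_, fun j hj => ?_⟩
    · simp [corner, Function.update_of_ne hj.ne, Fin.lt_def.mp hj]
    · simp [corner, Function.update_of_ne hj.ne', (Fin.lt_def.mp hj).not_gt]
  have hreach : ∀ m ≤ d, (avoidGraph (boxGraph r) C).Reachable a (corner m) := by
    intro m
    induction m with
    | zero => intro; simp [corner]
    | succ m ih =>
      intro hm
      rw [hcorner m hm]
      exact (ih (Nat.le_of_succ_le hm)).trans <| reachable_update C _ _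
        (fun t => h.notMem_of_mem_left (Set.mem_iUnion_of_mem _ (hline m hm t))) _
  simpa [corner] using hreach d le_rfl

theorem ncard_mem_staircaseSegment_le (c : (i : Fin d) → Fin (r i)) (k : Fin d) :
    {p : ((i : Fin d) → Fin (r i)) × ((i : Fin d) → Fin (r i)) |
      c ∈ staircaseSegment p.1 p.2 k}.ncard ≤ Fintype.card ((i : Fin d) → Fin (r i)) * r k := by
  classical
  let encode (p : ((i : Fin d) → Fin (r i)) × ((i : Fin d) → Fin (r i))) :
      ((i : Fin d) → Fin (r i)) × Fin (r k) :=
    (fun j => if j ≤ k then p.1 j else p.2 j, p.2 k)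
  have hinj : Set.InjOn encode {p | c ∈ staircaseSegment p.1 p.2 k} := by
    rintro ⟨a, b⟩ ⟨hb, ha⟩ ⟨a', b'⟩ ⟨hb', ha'⟩ heq
    obtain ⟨hfst, hk⟩ := Prod.mk.inj heq
    have hfst := congrFun hfst
    simp only at hfst hk ha ha' hb hb'
    refine Prod.ext (funext fun j => ?_) (funext fun j => ?_)
    · rcases le_or_gt j k with hj | hj
      · simpa [hj] using hfst j
      · exact (ha j hj).symm.trans (ha' j hj)
    · rcases lt_trichotomy j k with hj | rfl | hj
      · exact (hb j hj).symm.trans (hb' j hj)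
      · exact hk
      · simpa [hj.not_ge] using hfst j
  calc _ ≤ (Set.univ : Set (((i : Fin d) → Fin (r i)) × Fin (r k))).ncard :=
        Set.ncard_le_ncard_of_injOn encode (fun _ _ => Set.mem_univ _) hinj
    _ = _ := by simp

theorem ncard_mem_staircase_le (c : (i : Fin d) → Fin (r i)) :
    {p : ((i : Fin d) → Fin (r i)) × ((i : Fin d) → Fin (r i)) |
      c ∈ staircase p.1 p.2}.ncard ≤ Fintype.card ((i : Fin d) → Fin (r i)) * ∑ k, r k := by
  have hunion : {p : ((i : Fin d) → Fin (r i)) × ((i : Fin d) → Fin (r i)) |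
      c ∈ staircase p.1 p.2} = ⋃ k, {p | c ∈ staircaseSegment p.1 p.2 k} := by
    ext p; simp [staircase]
  rw [hunion, Finset.mul_sum]
  exact (Set.ncard_iUnion_le_of_fintype _).trans
    (Finset.sum_le_sum fun k _ => ncard_mem_staircaseSegment_le c k)

theorem one_sub_mul_card_le_of_separator
    (C : Finset ((i : Fin d) → Fin (r i))) {α : ℝ} (hα : 0 ≤ α)
    (hsep : ∀ v ∉ C, ({w | (avoidGraph (boxGraph r) ↑C).Reachable v w} : Set _).ncard
      ≤ α * ((Finset.univ : Finset ((i : Fin d) → Fin (r i))).card : ℝ)) :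
    (1 - α) * (Fintype.card ((i : Fin d) → Fin (r i)) : ℝ) ≤ #C * (∑ k, (r k : ℝ) + 2) := by
  have h := one_sub_mul_card_sq_le_of_load_le (boxGraph r) C hα hsep staircase
    (reachable_of_disjoint_staircase _) ncard_mem_staircase_le
  push_cast at h
  rcases (Nat.cast_nonneg (α := ℝ) (Fintype.card ((i : Fin d) → Fin (r i)))).eq_or_lt with hN | hN
  · rw [← hN, mul_zero]
    positivity
  · exact le_of_mul_le_mul_right (by linarith) hN

end boxGraph

@[to_additive]
theorem Fin.prod_univ_ite_val_lt_two {M : Type*} [CommMonoid M] {d : ℕ} (hd : 2 ≤ d) (x y : M) :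
    ∏ i : Fin d, (if (i : ℕ) < 2 then x else y) = x ^ 2 * y ^ (d - 2) := by
  obtain ⟨e, rfl⟩ := Nat.exists_eq_add_of_le' hd
  simp [Fin.prod_univ_succ, pow_two, mul_assoc]

theorem squeezed_grid_separator_lower_bound_general
    (d n : ℕ) (hd : 2 ≤ d) (hn : 1 ≤ n) (hdvd : 4 ∣ n)
    (r : Fin d → ℕ) (hr : ∀ i : Fin d, r i = if (i : ℕ) < 2 then n / 4 else n)
    (α : ℝ) (hα1 : 1 / 2 ≤ α)
    (C : Finset ((i : Fin d) → Fin (r i)))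
    (hsep : ∀ v ∉ C,
      ({w | (avoidGraph (boxGraph r) ↑C).Reachable v w} : Set _).ncard
        ≤ α * ((Finset.univ : Finset ((i : Fin d) → Fin (r i))).card : ℝ)) :
    (1 - α) * (n : ℝ) ^ (d - 1) / (16 * d) ≤ (C.card : ℝ) := by
  have hn4 : (4 : ℝ) ≤ n := by exact_mod_cast Nat.le_of_dvd (by omega) hdvd
  have hrℝ : ∀ i, (r i : ℝ) = if (i : ℕ) < 2 then (n : ℝ) / 4 else n := by
    intro i
    rw [hr i]
    split_ifs <;> simp [Nat.cast_div hdvd]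
  have hcard : (Fintype.card ((i : Fin d) → Fin (r i)) : ℝ) = ((n : ℝ) / 4) ^ 2 * n ^ (d - 2) := by
    simp only [Fintype.card_pi, Fintype.card_fin, Nat.cast_prod, hrℝ,
      Fin.prod_univ_ite_val_lt_two hd]
  have hsum : ∑ k, (r k : ℝ) = 2 * ((n : ℝ) / 4) + (d - 2 : ℕ) * n := by
    simp only [hrℝ, Fin.sum_univ_ite_val_lt_two hd, nsmul_eq_mul, Nat.cast_ofNat]
  have hbound := boxGraph.one_sub_mul_card_le_of_separator C (by linarith) hsep
  rw [hcard, hsum, Nat.cast_sub hd] at hbound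
  have hpow : (n : ℝ) ^ (d - 1) = n ^ (d - 2) * n := by
    rw [← pow_succ]; congr 1; omega
  have hgrid : (#C : ℝ) * (2 * (n / 4) + (d - 2) * n + 2) ≤ #C * (d * n) :=
    mul_le_mul_of_nonneg_left (by linarith) (Nat.cast_nonneg _)
  rw [div_le_iff₀ (by positivity), hpow]
  refine le_of_mul_le_mul_right ?_ (by linarith : (0 : ℝ) < n)
  linarith

/-- Claim in Section 3: let `4 ∣ n` and `G` be the `(n/4) × (n/4) × n × ⋯ × n`
grid graph (`d` factors, the first two of side `n/4`). For `1/2 ≤ α < 1`, any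
`α`-separator of `G` has cardinality at least `(1−α)·n^{d−1}/(16d)`. -/
theorem squeezed_grid_separator_lower_bound
    (d n : ℕ) (hd : 2 ≤ d) (hn : 1 ≤ n) (hdvd : 4 ∣ n)
    (r : Fin d → ℕ) (hr : ∀ i : Fin d, r i = if (i : ℕ) < 2 then n / 4 else n)
    (α : ℝ) (hα1 : 1 / 2 ≤ α) (hα2 : α < 1)
    (C : Finset ((i : Fin d) → Fin (r i)))
    (hsep : ∀ v ∉ C,
      ({w | (avoidGraph (boxGraph r) ↑C).Reachable v w} : Set _).ncard
        ≤ α * ((Finset.univ : Finset ((i : Fin d) → Fin (r i))).card : ℝ)) :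
    (1 - α) * (n : ℝ) ^ (d - 1) / (16 * d) ≤ (C.card : ℝ) :=
  squeezed_grid_separator_lower_bound_general d n hd hn hdvd r hr α hα1 C hsep
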